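/- Suppose the weights a¹,…,a^{m+1}, b₁,…,b_n are all positive integers and b_j ≥ a^σ for every j ∈ {1,…,n} and every σ ∈ {1,…,m+1}. Let f ∈ ℂ[x|θ] be even, homogeneous of some weight, and irreducible, and suppose f does not lie in ℂ[x] (f is homogeneously non-reduced). Then there is no ℂ-algebra automorphism φ of ℂ[x|θ] such that φ(x^μ) − x^μ ∈ J² and φ(θ_j) − θ_j ∈ J² for all μ, j, such that φ(x^μ) is homogeneous of weight a^μ and φ(θ_j) is homogeneous of weight b_j for all μ, j, and such that φ(f) ∈ ℂ[x]. (Hypersurface case of the theorem that homogeneously non-reduced subvarieties of positive weighted projective superspaces are homogeneously non-split.) -/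

import Mathlib

open scoped TensorProduct
set_option maxHeartbeats 1000000
set_option synthInstance.maxHeartbeats 400000

noncomputable section

/-- The superalgebra ℂ[x|θ] = ℂ[x¹,…,x^m] ⊗ ⋀(θ₁,…,θ_n). -/
abbrev SuperAlg (m n : ℕ) : Type :=
  MvPolynomial (Fin m) ℂ ⊗[ℂ] ExteriorAlgebra ℂ (Fin n → ℂ)

/-- The even coordinate x^μ. -/
def xVar (m n : ℕ) (μ : Fin m) : SuperAlg m n :=
  (MvPolynomial.X μ) ⊗ₜ[ℂ] 1

/-- The odd coordinate θ_j. -/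
def thetaVar (m n : ℕ) (j : Fin n) : SuperAlg m n :=
  1 ⊗ₜ[ℂ] ExteriorAlgebra.ι ℂ (Pi.single j 1)

/-- The ordered product θ_{i₁}⋯θ_{i_k}, i₁ < ⋯ < i_k, over a finset of indices. -/
def thetaProd (m n : ℕ) (s : Finset (Fin n)) : SuperAlg m n :=
  ((s.sort (· ≤ ·)).map (thetaVar m n)).prod

/-- The basis monomial x^α · θ_{i₁}⋯θ_{i_k}. -/
def smonomial (m n : ℕ) (α : Fin m →₀ ℕ) (s : Finset (Fin n)) : SuperAlg m n :=
  ((MvPolynomial.monomial α (1 : ℂ)) ⊗ₜ[ℂ] 1) * thetaProd m n s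

/-- The weight of the monomial x^α·θ_{i₁}⋯θ_{i_k}: Σ_μ α_μ a^μ + Σ_{j ∈ s} b_j. -/
def monWeight (m n : ℕ) (a : Fin m → ℤ) (b : Fin n → ℤ)
    (α : Fin m →₀ ℕ) (s : Finset (Fin n)) : ℤ :=
  (α.sum fun μ k => (k : ℤ) * a μ) + ∑ j ∈ s, b j

/-- An element of ℂ[x|θ] is homogeneous of weight d if it is a ℂ-linear combination of
monomials of weight d. -/
def IsHomogOfWeight (m n : ℕ) (a : Fin m → ℤ) (b : Fin n → ℤ) (d : ℤ)
    (f : SuperAlg m n) : Prop :=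
  f ∈ Submodule.span ℂ
    {g | ∃ α s, monWeight m n a b α s = d ∧ g = smonomial m n α s}

/-- An element of ℂ[x|θ] is even if it is a ℂ-linear combination of monomials with an even
number of θ-factors. -/
def IsEvenElem (m n : ℕ) (f : SuperAlg m n) : Prop :=
  f ∈ Submodule.span ℂ {g | ∃ α s, Even s.card ∧ g = smonomial m n α s}

/-- An element of ℂ[x|θ] is odd if it is a ℂ-linear combination of monomials with an odd
number of θ-factors. -/
def IsOddElem (m n : ℕ) (f : SuperAlg m n) : Prop :=
  f ∈ Submodule.span ℂ {g | ∃ α s, Odd s.card ∧ g = smonomial m n α s}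

/-- The subalgebra ℂ[x] ⊂ ℂ[x|θ] of elements involving no θ's. -/
def polySub (m n : ℕ) : Subalgebra ℂ (SuperAlg m n) :=
  (Algebra.TensorProduct.includeLeft :
    MvPolynomial (Fin m) ℂ →ₐ[ℂ] SuperAlg m n).range

/-- The map f ↦ f(x|0), the ℂ-algebra map ℂ[x|θ] → ℂ[x] fixing each x^μ and sending each θ_j
to 0. -/
def bodyMap (m n : ℕ) : SuperAlg m n →ₐ[ℂ] MvPolynomial (Fin m) ℂ :=
  Algebra.TensorProduct.lift (AlgHom.id ℂ _)
    ((Algebra.ofId ℂ _).comp ExteriorAlgebra.algebraMapInv)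
    (fun _ _ => Commute.all _ _)

/-- The fermionic ideal J, the two-sided ideal generated by θ₁,…,θ_n. -/
def fermIdeal (m n : ℕ) : TwoSidedIdeal (SuperAlg m n) :=
  TwoSidedIdeal.span (Set.range (thetaVar m n))

/-- The ideal J², the two-sided ideal generated by products of pairs of elements of J. -/
def fermIdealSq (m n : ℕ) : TwoSidedIdeal (SuperAlg m n) :=
  TwoSidedIdeal.span {z | ∃ u ∈ fermIdeal m n, ∃ v ∈ fermIdeal m n, z = u * v}

end

noncomputable section AuxNonsplit

abbrev TargAlg (m n : ℕ) : Type :=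
  MvPolynomial (Fin m) ℂ ⊗[ℂ] TrivSqZeroExt ℂ (Fin n → ℂ)

instance (priority := 3000) tszeCommRing (n : ℕ) : CommRing (TrivSqZeroExt ℂ (Fin n → ℂ)) :=
  inferInstance

instance (priority := 3000) tszeAlgebra (n : ℕ) : Algebra ℂ (TrivSqZeroExt ℂ (Fin n → ℂ)) :=
  inferInstance

instance (priority := 3000) targCommRing (m n : ℕ) : CommRing (TargAlg m n) := inferInstance

instance (priority := 3000) targAlgebra (m n : ℕ) : Algebra ℂ (TargAlg m n) := inferInstance

def extToTSZE (n : ℕ) : ExteriorAlgebra ℂ (Fin n → ℂ) →ₐ[ℂ] TrivSqZeroExt ℂ (Fin n → ℂ) :=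
  ExteriorAlgebra.lift ℂ ⟨TrivSqZeroExt.inrHom ℂ _, fun v => TrivSqZeroExt.inr_mul_inr ℂ v v⟩

def psiMap (m n : ℕ) :
    SuperAlg m n →ₐ[ℂ] TargAlg m n :=
  Algebra.TensorProduct.map (AlgHom.id ℂ _) (extToTSZE n)

def Lmap (n : ℕ) : TrivSqZeroExt ℂ (Fin n → ℂ) →ₗ[ℂ] ExteriorAlgebra ℂ (Fin n → ℂ) :=
  ((Algebra.linearMap ℂ (ExteriorAlgebra ℂ (Fin n → ℂ))) ∘ₗ
      (TrivSqZeroExt.fstHom ℂ ℂ (Fin n → ℂ)).toLinearMap)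
    + ((ExteriorAlgebra.ι ℂ) ∘ₗ TrivSqZeroExt.sndHom ℂ (Fin n → ℂ))

def thetaBack (m n : ℕ) : TargAlg m n →ₗ[ℂ] SuperAlg m n :=
  TensorProduct.map LinearMap.id (Lmap n)

lemma Lmap_one (n : ℕ) : Lmap n 1 = 1 := by
  simp [Lmap, TrivSqZeroExt.fst_one, TrivSqZeroExt.snd_one]

lemma Lmap_inr (n : ℕ) (v : Fin n → ℂ) :
    Lmap n (TrivSqZeroExt.inr v) = ExteriorAlgebra.ι ℂ v := by
  simp [Lmap, TrivSqZeroExt.fst_inr, TrivSqZeroExt.snd_inr]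

lemma psi_theta (m n : ℕ) (j : Fin n) :
    psiMap m n (thetaVar m n j) = (1 : MvPolynomial (Fin m) ℂ) ⊗ₜ[ℂ]
      TrivSqZeroExt.inr (Pi.single j (1 : ℂ)) := by
  simp [psiMap, thetaVar, extToTSZE, ExteriorAlgebra.lift_ι_apply]
  erw [ExteriorAlgebra.lift_ι_apply]
  rfl

/-- the ideal generated by the images of the thetas -/
def targIdeal (m n : ℕ) : Ideal (TargAlg m n) :=
  Ideal.span (Set.range fun j : Fin n =>
    (1 : MvPolynomial (Fin m) ℂ) ⊗ₜ[ℂ] TrivSqZeroExt.inr (Pi.single j (1 : ℂ)))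

lemma psi_fermIdeal (m n : ℕ) {u : SuperAlg m n} (hu : u ∈ fermIdeal m n) :
    psiMap m n u ∈ targIdeal m n := by
  let P : TwoSidedIdeal (SuperAlg m n) :=
    TwoSidedIdeal.mk' {x | psiMap m n x ∈ targIdeal m n}
      (by simp)
      (fun {x y} hx hy => by
        simp only [Set.mem_setOf_eq, map_add] at *
        exact Ideal.add_mem _ hx hy)
      (fun {x} hx => by
        simp only [Set.mem_setOf_eq, map_neg] at *
        exact Submodule.neg_mem _ hx)
      (fun {x y} hy => by
        simp only [Set.mem_setOf_eq, map_mul] at *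
        exact Ideal.mul_mem_left (targIdeal m n) (psiMap m n x) hy)
      (fun {x y} hx => by
        simp only [Set.mem_setOf_eq, map_mul] at *
        exact Ideal.mul_mem_right (psiMap m n y) (targIdeal m n) hx)
  have : u ∈ P := by
    refine TwoSidedIdeal.mem_span_iff.mp hu P ?_
    rintro _ ⟨j, rfl⟩
    show psiMap m n (thetaVar m n j) ∈ targIdeal m n
    rw [psi_theta]
    exact Ideal.subset_span ⟨j, rfl⟩
  simpa [P] using this

lemma targIdeal_mul_gen (m n : ℕ) (j : Fin n) {r : TargAlg m n}
    (hr : r ∈ targIdeal m n) :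
    r * ((1 : MvPolynomial (Fin m) ℂ) ⊗ₜ[ℂ] TrivSqZeroExt.inr (Pi.single j (1 : ℂ))) = 0 := by
  rw [targIdeal] at hr
  induction hr using Submodule.span_induction with
  | mem g hg =>
    obtain ⟨k, rfl⟩ := hg
    rw [Algebra.TensorProduct.tmul_mul_tmul, TrivSqZeroExt.inr_mul_inr, TensorProduct.tmul_zero]
  | zero => exact zero_mul _
  | add x y _ _ hx hy => rw [add_mul, hx, hy, add_zero]
  | smul c x _ hx => rw [smul_mul_assoc, hx, smul_zero]

lemma targIdeal_mul (m n : ℕ) {r s : TargAlg m n}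
    (hr : r ∈ targIdeal m n) (hs : s ∈ targIdeal m n) : r * s = 0 := by
  rw [targIdeal] at hs
  induction hs using Submodule.span_induction with
  | mem g hg =>
    obtain ⟨k, rfl⟩ := hg
    exact targIdeal_mul_gen m n k hr
  | zero => exact mul_zero _
  | add x y _ _ hx hy => rw [mul_add, hx, hy, add_zero]
  | smul c x _ hx => rw [mul_smul_comm, hx, smul_zero]

lemma psi_fermIdealSq (m n : ℕ) {z : SuperAlg m n} (hz : z ∈ fermIdealSq m n) :
    psiMap m n z = 0 := by
  let Q : TwoSidedIdeal (SuperAlg m n) :=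
    TwoSidedIdeal.mk' {x | psiMap m n x = 0}
      (by simp)
      (fun {x y} hx hy => by
        simp only [Set.mem_setOf_eq] at *
        rw [map_add, hx, hy, add_zero])
      (fun {x} hx => by
        simp only [Set.mem_setOf_eq] at *
        rw [map_neg, hx, neg_zero])
      (fun {x y} hy => by
        simp only [Set.mem_setOf_eq] at *
        rw [map_mul, hy]
        exact mul_zero _)
      (fun {x y} hx => by
        simp only [Set.mem_setOf_eq] at *
        rw [map_mul, hx]
        exact zero_mul _)
  have : z ∈ Q := by
    refine TwoSidedIdeal.mem_span_iff.mp hz Q ?_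
    rintro _ ⟨u, hu, v, hv, rfl⟩
    simp only [Q, SetLike.mem_coe, TwoSidedIdeal.mem_mk', Set.mem_setOf_eq]
    rw [map_mul]
    exact targIdeal_mul m n (psi_fermIdeal m n hu) (psi_fermIdeal m n hv)
  simpa [Q] using this

lemma thetaProd_empty (m n : ℕ) : thetaProd m n (∅ : Finset (Fin n)) = 1 := by
  simp [thetaProd]

lemma thetaProd_singleton (m n : ℕ) (j : Fin n) : thetaProd m n {j} = thetaVar m n j := by
  simp [thetaProd]

lemma thetaBack_psi_fix (m n : ℕ) (α : Fin m →₀ ℕ) (s : Finset (Fin n)) (hs : s.card ≤ 1) :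
    thetaBack m n (psiMap m n (smonomial m n α s)) = smonomial m n α s := by
  interval_cases h : s.card
  · rw [Finset.card_eq_zero] at h
    subst h
    rw [smonomial, thetaProd_empty, mul_one]
    simp [psiMap, thetaBack, extToTSZE, Lmap_one]
  · rw [Finset.card_eq_one] at h
    obtain ⟨j, rfl⟩ := h
    rw [smonomial, thetaProd_singleton, thetaVar, Algebra.TensorProduct.tmul_mul_tmul,
      mul_one, one_mul]
    simp [psiMap, thetaBack, extToTSZE, ExteriorAlgebra.lift_ι_apply, Lmap_inr]
    erw [ExteriorAlgebra.lift_ι_apply]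
    simp [Lmap_inr]

lemma homog_fixed (m n : ℕ) (a : Fin m → ℤ) (b : Fin n → ℤ) (d : ℤ)
    (hcard : ∀ α s, monWeight m n a b α s = d → s.card ≤ 1)
    {z : SuperAlg m n} (hz : IsHomogOfWeight m n a b d z) :
    thetaBack m n (psiMap m n z) = z := by
  induction hz using Submodule.span_induction with
  | mem g hg =>
    obtain ⟨α, s, hw, rfl⟩ := hg
    exact thetaBack_psi_fix m n α s (hcard α s hw)
  | zero => simp
  | add x y _ _ hx hy => rw [map_add, map_add, hx, hy]
  | smul c x _ hx => rw [map_smul, map_smul, hx]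

lemma weight_card_le (m n : ℕ) (a : Fin m → ℤ) (b : Fin n → ℤ)
    (ha : ∀ σ, 0 < a σ) (hba : ∀ j σ, a σ ≤ b j) (μ : Fin m)
    (α : Fin m →₀ ℕ) (s : Finset (Fin n)) (hw : monWeight m n a b α s = a μ) :
    s.card ≤ 1 := by
  by_contra hcon
  push_neg at hcon
  have h1 : 0 ≤ α.sum fun ν k => (k : ℤ) * a ν := by
    apply Finset.sum_nonneg
    intro ν _
    exact mul_nonneg (Int.ofNat_nonneg _) (ha ν).le
  have h2 : (s.card : ℤ) * a μ ≤ ∑ j ∈ s, b j := by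
    calc (s.card : ℤ) * a μ = ∑ _j ∈ s, a μ := by rw [Finset.sum_const, nsmul_eq_mul]
    _ ≤ ∑ j ∈ s, b j := Finset.sum_le_sum fun j _ => hba j μ
  have h3 : (2 : ℤ) * a μ ≤ (s.card : ℤ) * a μ := by
    apply mul_le_mul_of_nonneg_right _ (ha μ).le
    exact_mod_cast hcon
  rw [monWeight] at hw
  have := ha μ
  linarith


lemma xVar_homog (m n : ℕ) (a : Fin m → ℤ) (b : Fin n → ℤ) (μ : Fin m) :
    IsHomogOfWeight m n a b (a μ) (xVar m n μ) := by
  apply Submodule.subset_span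
  refine ⟨Finsupp.single μ 1, ∅, ?_, ?_⟩
  · simp [monWeight, Finsupp.sum_single_index]
  · rw [smonomial, thetaProd_empty, mul_one]
    rfl

lemma fix_includeLeft (m n : ℕ) (ψ : SuperAlg m n ≃ₐ[ℂ] SuperAlg m n)
    (hψ : ∀ μ, ψ (xVar m n μ) = xVar m n μ) (p : MvPolynomial (Fin m) ℂ) :
    ψ ((Algebra.TensorProduct.includeLeft :
          MvPolynomial (Fin m) ℂ →ₐ[ℂ] SuperAlg m n) p)
      = (Algebra.TensorProduct.includeLeft :
          MvPolynomial (Fin m) ℂ →ₐ[ℂ] SuperAlg m n) p := by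
  have h : (ψ.toAlgHom.comp (Algebra.TensorProduct.includeLeft :
        MvPolynomial (Fin m) ℂ →ₐ[ℂ] SuperAlg m n))
      = (Algebra.TensorProduct.includeLeft :
        MvPolynomial (Fin m) ℂ →ₐ[ℂ] SuperAlg m n) := by
    apply MvPolynomial.algHom_ext
    intro μ
    simpa [xVar, Algebra.TensorProduct.includeLeft_apply] using hψ μ
  exact DFunLike.congr_fun h p

end AuxNonsplit

/-- Hypersurface case: if the weights a, b are positive with b_j ≥ a^σ for
all j, σ, and f ∈ ℂ[x|θ] is even, homogeneous, irreducible and homogeneously non-reduced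
(f ∉ ℂ[x]), then there is no ℂ-algebra automorphism φ of ℂ[x|θ] with φ(x^μ) − x^μ ∈ J²,
φ(θ_j) − θ_j ∈ J², φ(x^μ) homogeneous of weight a^μ, φ(θ_j) homogeneous of weight b_j,
and φ(f) ∈ ℂ[x]. -/
theorem positive_nonreduced_hypersurface_homogeneously_nonsplit
    (m n : ℕ) (a : Fin (m + 1) → ℤ) (b : Fin n → ℤ)
    (ha : ∀ σ, 0 < a σ) (hb : ∀ j, 0 < b j)
    (hba : ∀ (j : Fin n) (σ : Fin (m + 1)), a σ ≤ b j)
    (f : SuperAlg (m + 1) n)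
    (hev : IsEvenElem (m + 1) n f)
    (hhom : ∃ d : ℤ, IsHomogOfWeight (m + 1) n a b d f)
    (hirr : Irreducible (bodyMap (m + 1) n f))
    (hnonred : f ∉ polySub (m + 1) n) :
    ¬ ∃ φ : SuperAlg (m + 1) n ≃ₐ[ℂ] SuperAlg (m + 1) n,
      (∀ μ, φ (xVar (m + 1) n μ) - xVar (m + 1) n μ ∈ fermIdealSq (m + 1) n) ∧
      (∀ j, φ (thetaVar (m + 1) n j) - thetaVar (m + 1) n j ∈ fermIdealSq (m + 1) n) ∧
      (∀ μ, IsHomogOfWeight (m + 1) n a b (a μ) (φ (xVar (m + 1) n μ))) ∧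
      (∀ j, IsHomogOfWeight (m + 1) n a b (b j) (φ (thetaVar (m + 1) n j))) ∧
      φ f ∈ polySub (m + 1) n := by
  rintro ⟨φ, hJx, _hJθ, hWx, _hWθ, hf⟩
  have hx : ∀ μ, φ (xVar (m + 1) n μ) = xVar (m + 1) n μ := by
    intro μ
    have hcard : ∀ α s, monWeight (m + 1) n a b α s = a μ → s.card ≤ 1 :=
      fun α s hw => weight_card_le (m + 1) n a b ha hba μ α s hw
    have hzhom : IsHomogOfWeight (m + 1) n a b (a μ)
        (φ (xVar (m + 1) n μ) - xVar (m + 1) n μ) :=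
      Submodule.sub_mem _ (hWx μ) (xVar_homog (m + 1) n a b μ)
    have h1 := homog_fixed (m + 1) n a b (a μ) hcard hzhom
    rw [psi_fermIdealSq (m + 1) n (hJx μ), map_zero] at h1
    exact sub_eq_zero.mp h1.symm
  rw [polySub, AlgHom.mem_range] at hf
  obtain ⟨p, hp⟩ := hf
  apply hnonred
  rw [polySub, AlgHom.mem_range]
  refine ⟨p, ?_⟩
  have hsym : ∀ μ, φ.symm (xVar (m + 1) n μ) = xVar (m + 1) n μ := by
    intro μ
    exact (AlgEquiv.symm_apply_eq φ).mpr (hx μ).symm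
  have hfix := fix_includeLeft (m + 1) n φ.symm hsym p
  calc (Algebra.TensorProduct.includeLeft :
          MvPolynomial (Fin (m + 1)) ℂ →ₐ[ℂ] SuperAlg (m + 1) n) p
      = φ.symm ((Algebra.TensorProduct.includeLeft :
          MvPolynomial (Fin (m + 1)) ℂ →ₐ[ℂ] SuperAlg (m + 1) n) p) := hfix.symm
    _ = φ.symm (φ f) := by rw [hp]
    _ = f := φ.symm_apply_apply f
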